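/- arXiv:math/0509472 — 7 statements merged into one kernel-verified Lean document; each statement's English description precedes it below -/
import Mathlib

section
/- Let K be a field, L a Lie algebra over K, and g : ℤ → (K-submodules of L) a family satisfying: (i) ⁅g(i), g(j)⁆ ⊆ g(i+j) for all i, j ∈ ℤ; (ii) there is an integer d ≥ 1 with g(i) = 0 for all i < −d; (iii) g(k) ⊆ ⁅g(−1), g(k+1)⁆ for all k ≤ −2 (the component g(−1) generates the negative part). Let N ≥ 0 be an integer and h : ℤ → (K-submodules of L) a family such that: h(k) = g(k) for all k < 0; h(k) ⊆ g(k) for 0 ≤ k ≤ N; ⁅h(i), h(j)⁆ ⊆ h(i+j) whenever i ≤ N, j ≤ N and i + j ≤ N; and for every k > N, h(k) = { x ∈ g(k) : ⁅x, y⁆ ∈ h(k−1) for all y ∈ g(−1) }. Then ⁅h(i), h(j)⁆ ⊆ h(i+j) for all i, j ∈ ℤ. -/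
/-- The submodule spanned by all brackets `⁅a, b⁆` with `a ∈ A`, `b ∈ B`;
this formalizes `⁅A, B⁆` for submodules `A`, `B` of a Lie algebra. -/
def bracketSpan {K L : Type*} [Field K] [LieRing L] [LieAlgebra K L]
    (A B : Submodule K L) : Submodule K L :=
  Submodule.span K {x | ∃ a ∈ A, ∃ b ∈ B, x = ⁅a, b⁆}

/-- the partial prolong `h` of a beginning part (components of degree
`≤ N`) inside the graded Lie algebra determined by `g` is closed under the bracket:
`⁅h(i), h(j)⁆ ⊆ h(i+j)` for all `i, j ∈ ℤ`. -/
theorem partialProlong_bracket_closed {K L : Type*} [Field K] [LieRing L] [LieAlgebra K L]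
    (g : ℤ → Submodule K L)
    (hg : ∀ i j, bracketSpan (g i) (g j) ≤ g (i + j))
    (d : ℤ) (hd : 1 ≤ d) (hdepth : ∀ i, i < -d → g i = ⊥)
    (hgen : ∀ k, k ≤ -2 → g k ≤ bracketSpan (g (-1)) (g (k + 1)))
    (N : ℤ) (hN : 0 ≤ N)
    (h : ℤ → Submodule K L)
    (hneg : ∀ k, k < 0 → h k = g k)
    (hbeg : ∀ k, 0 ≤ k → k ≤ N → h k ≤ g k)
    (hclosed : ∀ i j, i ≤ N → j ≤ N → i + j ≤ N →
        bracketSpan (h i) (h j) ≤ h (i + j))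
    (hrec : ∀ k, N < k → ∀ x,
        x ∈ h k ↔ x ∈ g k ∧ ∀ y ∈ g (-1), ⁅x, y⁆ ∈ h (k - 1)) :
    ∀ i j, bracketSpan (h i) (h j) ≤ h (i + j) := by
  -- a cast helper for rewriting indices
  have hc : ∀ {m m' : ℤ} (a : L), m = m' → a ∈ h m → a ∈ h m' := by
    rintro m m' a rfl ha; exact ha
  -- generators lie in the bracket span
  have mem_bs : ∀ (A B : Submodule K L) (a b : L), a ∈ A → b ∈ B →
      ⁅a, b⁆ ∈ bracketSpan A B := by
    intro A B a b ha hb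
    exact Submodule.subset_span ⟨a, ha, b, hb, rfl⟩
  -- h k ≤ g k for all k
  have hsub : ∀ k, h k ≤ g k := by
    intro k
    by_cases hk : k < 0
    · rw [hneg k hk]
    · by_cases hkN : k ≤ N
      · exact hbeg k (by omega) hkN
      · intro x hx
        exact ((hrec k (by omega) x).mp hx).1
  -- single step: bracketing with g(-1) lowers degree by one, staying in h
  have step : ∀ i (x : L), x ∈ h i → ∀ z ∈ g (-1), ⁅x, z⁆ ∈ h (i - 1) := by
    intro i x hx z hz
    by_cases hi : i ≤ N
    · have hz' : z ∈ h (-1) := by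
        rw [hneg (-1) (by norm_num)]; exact hz
      have := hclosed i (-1) hi (by omega) (by omega) (mem_bs _ _ _ _ hx hz')
      exact hc _ (by ring) this
    · exact ((hrec i (by omega) x).mp hx).2 z hz
  -- multi step: bracketing with g(-(n+1)) lowers degree by n+1, staying in h
  have Lneg : ∀ n : ℕ, ∀ i (x : L), x ∈ h i → ∀ y ∈ g (-(n + 1 : ℤ)),
      ⁅x, y⁆ ∈ h (i - (n + 1)) := by
    intro n
    induction n with
    | zero =>
      intro i x hx y hy
      exact step i x hx y (by simpa using hy)
    | succ n ih =>
      intro i x hx y hy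
      have hy2 : y ∈ bracketSpan (g (-1)) (g (-((n : ℤ) + 1 + 1) + 1)) :=
        hgen _ (by omega) hy
      have key : bracketSpan (g (-1)) (g (-((n : ℤ) + 1 + 1) + 1)) ≤
          Submodule.comap (LieAlgebra.ad K L x)
            (h (i - ((n : ℤ) + 1 + 1))) := by
        rw [bracketSpan, Submodule.span_le]
        rintro _ ⟨z, hz, w, hw, rfl⟩
        simp only [SetLike.mem_coe, Submodule.mem_comap, LieAlgebra.ad_apply]
        have hw' : w ∈ g (-((n : ℤ) + 1)) := by
          have e : -((n : ℤ) + 1 + 1) + 1 = -((n : ℤ) + 1) := by ring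
          rwa [e] at hw
        have t1 : ⁅(⁅x, z⁆ : L), w⁆ ∈ h (i - 1 - ((n : ℤ) + 1)) :=
          ih (i - 1) _ (step i x hx z hz) w hw'
        have t2 : (⁅x, w⁆ : L) ∈ h (i - ((n : ℤ) + 1)) := ih i x hx w hw'
        have t3 : (⁅(⁅x, w⁆ : L), z⁆ : L) ∈ h (i - ((n : ℤ) + 1) - 1) :=
          step _ _ t2 z hz
        have t4 : (⁅z, (⁅x, w⁆ : L)⁆ : L) ∈ h (i - ((n : ℤ) + 1) - 1) := by
          rw [← lie_skew]
          exact neg_mem t3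
        rw [leibniz_lie]
        exact add_mem (hc _ (by ring) t1) (hc _ (by ring) t4)
      have := key hy2
      simpa using this
  -- nonnegative degrees: induction on how far i + j exceeds N
  have Qpos : ∀ n : ℕ, ∀ i j, 0 ≤ i → 0 ≤ j → i + j ≤ N + n →
      ∀ x ∈ h i, ∀ y ∈ h j, ⁅x, y⁆ ∈ h (i + j) := by
    intro n
    induction n with
    | zero =>
      intro i j hi hj hsum x hx y hy
      exact hclosed i j (by omega) (by omega) (by omega) (mem_bs _ _ _ _ hx hy)
    | succ n ih =>
      intro i j hi hj hsum x hx y hy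
      by_cases hle : i + j ≤ N + n
      · exact ih i j hi hj hle x hx y hy
      · have hNs : N < i + j := by omega
        refine (hrec (i + j) hNs _).mpr ⟨?_, ?_⟩
        · exact hg i j (mem_bs _ _ _ _ (hsub i hx) (hsub j hy))
        · intro z hz
          rw [lie_lie]
          have tA : (⁅x, (⁅y, z⁆ : L)⁆ : L) ∈ h (i + j - 1) := by
            have hyz : (⁅y, z⁆ : L) ∈ h (j - 1) := step j y hy z hz
            by_cases hj0 : j = 0
            · have hyz' : (⁅y, z⁆ : L) ∈ g (-1) := by
                rw [← hneg (-1) (by norm_num)]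
                exact hc _ (by omega) hyz
              exact hc _ (by omega) (step i x hx _ hyz')
            · have := ih i (j - 1) hi (by omega) (by omega) x hx _ hyz
              exact hc _ (by ring) this
          have tB : (⁅y, (⁅x, z⁆ : L)⁆ : L) ∈ h (i + j - 1) := by
            have hxz : (⁅x, z⁆ : L) ∈ h (i - 1) := step i x hx z hz
            by_cases hi0 : i = 0
            · have hxz' : (⁅x, z⁆ : L) ∈ g (-1) := by
                rw [← hneg (-1) (by norm_num)]
                exact hc _ (by omega) hxz
              exact hc _ (by omega) (step j y hy _ hxz')
            · have := ih j (i - 1) hj (by omega) (by omega) y hy _ hxz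
              exact hc _ (by ring) this
          exact sub_mem tA tB
  -- now the main statement
  intro i j
  rw [bracketSpan, Submodule.span_le]
  rintro _ ⟨x, hx, y, hy, rfl⟩
  simp only [SetLike.mem_coe]
  by_cases hj : j < 0
  · have hy' : y ∈ g j := by rw [← hneg j hj]; exact hy
    have hy'' : y ∈ g (-(((-j - 1).toNat : ℤ) + 1)) := by
      have e : (-(((-j - 1).toNat : ℤ) + 1)) = j := by omega
      rwa [e]
    have := Lneg ((-j - 1).toNat) i x hx y hy''
    exact hc _ (by omega) this
  · by_cases hi : i < 0
    · have hx' : x ∈ g i := by rw [← hneg i hi]; exact hx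
      have hx'' : x ∈ g (-(((-i - 1).toNat : ℤ) + 1)) := by
        have e : (-(((-i - 1).toNat : ℤ) + 1)) = i := by omega
        rwa [e]
      have := Lneg ((-i - 1).toNat) j y hy x hx''
      have : (⁅x, y⁆ : L) ∈ h (j - (((-i - 1).toNat : ℤ) + 1)) := by
        rw [← lie_skew]
        exact neg_mem this
      exact hc _ (by omega) this
    · exact Qpos (i + j).toNat i j (by omega) (by omega) (by omega) x hx y hy
end

section
/- Let K be a field, L a Lie algebra over K, and g : ℤ → (K-submodules of L) a family satisfying: (i) ⁅g(i), g(j)⁆ ⊆ g(i+j) for all i, j ∈ ℤ; (ii) there is an integer d ≥ 1 with g(i) = 0 for all i < −d; (iii) g(k) ⊆ ⁅g(−1), g(k+1)⁆ for all k ≤ −2. Let N ≥ 0 and let h : ℤ → (K-submodules of L) satisfy: h(k) = g(k) for all k < 0; h(k) ⊆ g(k) for 0 ≤ k ≤ N; and for every k > N, h(k) = { x ∈ g(k) : ⁅x, y⁆ ∈ h(k−1) for all y ∈ g(−1) }. Suppose p : ℤ → (K-submodules of L) satisfies p(k) ⊆ g(k) for all k, ⁅p(i), p(j)⁆ ⊆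 p(i+j) for all i, j, and p(k) = h(k) for all k ≤ N. Then p(k) ⊆ h(k) for all k ∈ ℤ. That is, the partial prolong h is the maximal graded subalgebra of the graded Lie algebra determined by g whose components in degrees ≤ N coincide with the given beginning part. -/
/-! Each `p k` lies in `g k`, and bracketing with `g (-1) = p (-1)` lowers the degree of `p`
by one, so by induction on `k ≥ N` every element of `p k` satisfies the defining condition
of the prolong `h k`. -/

section

variable {K L : Type*} [Field K] [LieRing L] [LieAlgebra K L]

theorem lie_mem_of_bracketSpan_le {A B C : Submodule K L} (hABC : bracketSpan A B ≤ C)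
    {a b : L} (ha : a ∈ A) (hb : b ∈ B) : ⁅a, b⁆ ∈ C :=
  hABC (Submodule.subset_span ⟨a, ha, b, hb, rfl⟩)

theorem le_prolong_of_lie_mem {g h p : ℤ → Submodule K L} {N : ℤ}
    (hrec : ∀ k, N < k → ∀ x, x ∈ h k ↔ x ∈ g k ∧ ∀ y ∈ g (-1), ⁅x, y⁆ ∈ h (k - 1))
    (hpg : ∀ k, p k ≤ g k) (hlie : ∀ k, ∀ x ∈ p k, ∀ y ∈ g (-1), ⁅x, y⁆ ∈ p (k - 1))
    (hN : p N ≤ h N) : ∀ k, N ≤ k → p k ≤ h k := by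
  refine Int.leInduction (motive := fun k _ => p k ≤ h k) hN fun n hn ih x hx => ?_
  rw [hrec (n + 1) (by omega)]
  refine ⟨hpg _ hx, fun y hy => ?_⟩
  simpa using ih (by simpa using hlie (n + 1) x hx y hy)

end

theorem partialProlong_maximal_general {K L : Type*} [Field K] [LieRing L] [LieAlgebra K L]
    (g : ℤ → Submodule K L)
    (N : ℤ) (hN : 0 ≤ N)
    (h : ℤ → Submodule K L)
    (hneg : ∀ k, k < 0 → h k = g k)
    (hrec : ∀ k, N < k → ∀ x,
        x ∈ h k ↔ x ∈ g k ∧ ∀ y ∈ g (-1), ⁅x, y⁆ ∈ h (k - 1))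
    (p : ℤ → Submodule K L)
    (hpg : ∀ k, p k ≤ g k)
    (hpclosed : ∀ i j, bracketSpan (p i) (p j) ≤ p (i + j))
    (hph : ∀ k, k ≤ N → p k = h k) :
    ∀ k, p k ≤ h k := by
  have hp_neg_one : p (-1) = g (-1) := by
    rw [hph (-1) (by omega), hneg (-1) (by omega)]
  have hlie : ∀ k, ∀ x ∈ p k, ∀ y ∈ g (-1), ⁅x, y⁆ ∈ p (k - 1) := fun k x hx y hy =>
    lie_mem_of_bracketSpan_le (hpclosed k (-1)) hx (hp_neg_one ▸ hy)
  intro k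
  rcases le_or_gt k N with hk | hk
  · exact (hph k hk).le
  · exact le_prolong_of_lie_mem hrec hpg hlie (hph N le_rfl).le k hk.le

/-- the partial prolong `h` is the maximal graded subalgebra of the
graded Lie algebra determined by `g` whose components in degrees `≤ N` coincide
with the given beginning part: any bracket-closed graded family `p` contained in
`g` with `p(k) = h(k)` for `k ≤ N` satisfies `p(k) ⊆ h(k)` for all `k`. -/
theorem partialProlong_maximal {K L : Type*} [Field K] [LieRing L] [LieAlgebra K L]
    (g : ℤ → Submodule K L)
    (hg : ∀ i j, bracketSpan (g i) (g j) ≤ g (i + j))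
    (d : ℤ) (hd : 1 ≤ d) (hdepth : ∀ i, i < -d → g i = ⊥)
    (hgen : ∀ k, k ≤ -2 → g k ≤ bracketSpan (g (-1)) (g (k + 1)))
    (N : ℤ) (hN : 0 ≤ N)
    (h : ℤ → Submodule K L)
    (hneg : ∀ k, k < 0 → h k = g k)
    (hbeg : ∀ k, 0 ≤ k → k ≤ N → h k ≤ g k)
    (hrec : ∀ k, N < k → ∀ x,
        x ∈ h k ↔ x ∈ g k ∧ ∀ y ∈ g (-1), ⁅x, y⁆ ∈ h (k - 1))
    (p : ℤ → Submodule K L)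
    (hpg : ∀ k, p k ≤ g k)
    (hpclosed : ∀ i j, bracketSpan (p i) (p j) ≤ p (i + j))
    (hph : ∀ k, k ≤ N → p k = h k) :
    ∀ k, p k ≤ h k :=
  partialProlong_maximal_general g N hN h hneg hrec p hpg hpclosed hph
end

section
/- Let K be a field of characteristic 0, n ≥ 1, and P = K[x₁,…,xₙ] the polynomial ring. Let X₁,…,Xₙ be K-derivations of P such that for all i, j the constant term of Xᵢ(xⱼ) equals δᵢⱼ (i.e., Xᵢ(xⱼ) evaluated at x = 0 is 1 if i = j and 0 otherwise). If D is a K-derivation of P such that [Xᵢ, D] = 0 for all i = 1,…,n and the constant term of D(xⱼ) is 0 for all j = 1,…,n, then D = 0. In particular, every derivation commuting with all the Xᵢ is uniquely determined by the constant terms of its coefficients. -/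
/-!
Let `𝔪 = (x₁, …, xₙ)`. If every `D xⱼ` lies in `𝔪 ^ (m + 1)`, then `Xᵢ (D xⱼ) = D (Xᵢ xⱼ)` lies
there too; and since `Xᵢ xₖ ≡ δᵢₖ` modulo `𝔪`, the derivations `Xᵢ` and `∂ᵢ` agree on
`𝔪 ^ (m + 1)` modulo `𝔪 ^ (m + 1)`. Thus all `∂ᵢ (D xⱼ)` lie in `𝔪 ^ (m + 1)`, which in
characteristic zero forces `D xⱼ ∈ 𝔪 ^ (m + 2)`. Starting from `D xⱼ ∈ 𝔪`, every `D xⱼ` lies in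
`⋂ₘ 𝔪 ^ m = 0`.
-/

open MvPolynomial

namespace MvPolynomial

section CommSemiring

variable {σ R : Type*} [CommSemiring R]

theorem mem_idealOfVars_iff_constantCoeff_eq_zero (p : MvPolynomial σ R) :
    p ∈ idealOfVars σ R ↔ constantCoeff p = 0 := by
  rw [← pow_one (idealOfVars σ R), mem_pow_idealOfVars_iff']
  simp [Finsupp.degree_eq_zero_iff, constantCoeff_eq]

theorem eq_zero_of_forall_mem_pow_idealOfVars {p : MvPolynomial σ R}
    (h : ∀ m, p ∈ idealOfVars σ R ^ m) : p = 0 := by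
  ext x
  exact (mem_pow_idealOfVars_iff' _ p).mp (h (x.degree + 1)) x (Nat.lt_succ_self _)

theorem pderiv_mem_pow_idealOfVars {p : MvPolynomial σ R} {m : ℕ}
    (hp : p ∈ idealOfVars σ R ^ (m + 1)) (i : σ) : pderiv i p ∈ idealOfVars σ R ^ m := by
  rw [mem_pow_idealOfVars_iff'] at hp ⊢
  intro x hx
  rw [coeff_pderiv, hp _ (by simpa using hx), zero_mul]

theorem mem_pow_idealOfVars_succ_of_pderiv_mem [NoZeroDivisors R] [CharZero R]
    {p : MvPolynomial σ R} {m : ℕ} (hp : p ∈ idealOfVars σ R)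
    (hderiv : ∀ i, pderiv i p ∈ idealOfVars σ R ^ m) : p ∈ idealOfVars σ R ^ (m + 1) := by
  rw [mem_pow_idealOfVars_iff']
  intro x hx
  obtain rfl | ⟨i, hi⟩ := eq_or_ne x 0 |>.imp_right Finsupp.ne_iff.mp
  · exact (mem_idealOfVars_iff_constantCoeff_eq_zero p).mp hp
  obtain ⟨y, rfl⟩ : ∃ y, x = y + Finsupp.single i 1 :=
    ⟨x - Finsupp.single i 1, (tsub_add_cancel_of_le (Finsupp.single_le_iff.mpr
      (Nat.one_le_iff_ne_zero.mpr hi))).symm⟩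
  have hy : coeff y (pderiv i p) = 0 :=
    (mem_pow_idealOfVars_iff' _ _).mp (hderiv i) y (by simpa using hx)
  rw [coeff_pderiv] at hy
  exact (mul_eq_zero.mp hy).resolve_right (Nat.cast_add_one_ne_zero _)

variable [Fintype σ]

theorem _root_.Derivation.apply_eq_sum_pderiv_smul {M : Type*} [AddCommMonoid M]
    [Module (MvPolynomial σ R) M] [Module R M] [IsScalarTower R (MvPolynomial σ R) M]
    (D : Derivation R (MvPolynomial σ R) M) (p : MvPolynomial σ R) :
    D p = ∑ i, pderiv i p • D (X i) := by
  classical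
  set E : σ → Derivation R (MvPolynomial σ R) M :=
    fun i => (LinearMap.toSpanSingleton _ M (D (X i))).compDer (pderiv i)
  have hE : ∀ q, (∑ i, E i) q = ∑ i, pderiv i q • D (X i) := fun q => by
    rw [← Derivation.coeFnAddMonoidHom_apply, map_sum, Finset.sum_apply]
    rfl
  have hD : D = ∑ i, E i := derivation_ext fun j => by simp [hE, pderiv_X, Pi.single_apply]
  rw [← hE, ← hD]

theorem _root_.Derivation.apply_mem_of_forall_X_mem {M : Type*} [AddCommMonoid M]
    [Module (MvPolynomial σ R) M] [Module R M] [IsScalarTower R (MvPolynomial σ R) M]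
    (D : Derivation R (MvPolynomial σ R) M) {N : Submodule (MvPolynomial σ R) M}
    (hD : ∀ i, D (X i) ∈ N) (p : MvPolynomial σ R) : D p ∈ N := by
  rw [D.apply_eq_sum_pderiv_smul]
  exact N.sum_mem fun i _ => N.smul_mem _ (hD i)

theorem _root_.Derivation.apply_mem_pow_idealOfVars_smul {M : Type*} [AddCommMonoid M]
    [Module (MvPolynomial σ R) M] [Module R M] [IsScalarTower R (MvPolynomial σ R) M]
    (D : Derivation R (MvPolynomial σ R) M) {N : Submodule (MvPolynomial σ R) M}
    (hD : ∀ i, D (X i) ∈ N) {p : MvPolynomial σ R} {m : ℕ}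
    (hp : p ∈ idealOfVars σ R ^ (m + 1)) : D p ∈ idealOfVars σ R ^ m • N := by
  rw [D.apply_eq_sum_pderiv_smul]
  exact Submodule.sum_mem _ fun i _ =>
    Submodule.smul_mem_smul (pderiv_mem_pow_idealOfVars hp i) (hD i)

end CommSemiring

section CommRing

variable {σ R : Type*} [Fintype σ] [DecidableEq σ] [CommRing R]

theorem _root_.Derivation.apply_sub_pderiv_mem_pow_idealOfVars
    (Y : Derivation R (MvPolynomial σ R) (MvPolynomial σ R)) (i : σ)
    (hY : ∀ k, constantCoeff (Y (X k)) = if i = k then 1 else 0)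
    {p : MvPolynomial σ R} {m : ℕ} (hp : p ∈ idealOfVars σ R ^ (m + 1)) :
    Y p - pderiv i p ∈ idealOfVars σ R ^ (m + 1) := by
  set Z : Derivation R (MvPolynomial σ R) (MvPolynomial σ R) := Y - pderiv i with hZ
  have hZX : ∀ k, Z (X k) ∈ idealOfVars σ R := fun k => by
    simp [hZ, mem_idealOfVars_iff_constantCoeff_eq_zero, hY, pderiv_X, Pi.single_apply, eq_comm]
  simpa [hZ, pow_succ, Ideal.smul_eq_mul] using Z.apply_mem_pow_idealOfVars_smul hZX hp

theorem _root_.Derivation.apply_X_mem_pow_idealOfVars_of_commute [NoZeroDivisors R] [CharZero R]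
    (Y : σ → Derivation R (MvPolynomial σ R) (MvPolynomial σ R))
    (hY : ∀ i k, constantCoeff (Y i (X k)) = if i = k then 1 else 0)
    (D : Derivation R (MvPolynomial σ R) (MvPolynomial σ R)) (hcomm : ∀ i, ⁅Y i, D⁆ = 0)
    (hD : ∀ j, D (X j) ∈ idealOfVars σ R) (m : ℕ) (j : σ) :
    D (X j) ∈ idealOfVars σ R ^ (m + 1) := by
  induction m generalizing j with
  | zero => simpa using hD j
  | succ m ih =>
    refine mem_pow_idealOfVars_succ_of_pderiv_mem (hD j) fun i => ?_
    have hYD : Y i (D (X j)) = D (Y i (X j)) := by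
      simpa [Derivation.commutator_apply, sub_eq_zero] using congr($(hcomm i) (X j))
    have hYD_mem : Y i (D (X j)) ∈ idealOfVars σ R ^ (m + 1) :=
      hYD ▸ D.apply_mem_of_forall_X_mem ih _
    simpa using sub_mem hYD_mem ((Y i).apply_sub_pderiv_mem_pow_idealOfVars i (hY i) (ih j))

end CommRing

end MvPolynomial

theorem centralizer_determined_by_constant_terms_general
    {K : Type*} [Field K] [CharZero K] (n : ℕ)
    (Xd : Fin n → Derivation K (MvPolynomial (Fin n) K) (MvPolynomial (Fin n) K))
    (hX : ∀ i j : Fin n,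
      constantCoeff (Xd i (X j)) = if i = j then (1 : K) else 0)
    (D : Derivation K (MvPolynomial (Fin n) K) (MvPolynomial (Fin n) K))
    (hcomm : ∀ i, ⁅Xd i, D⁆ = 0)
    (hconst : ∀ j, constantCoeff (D (X j)) = 0) :
    D = 0 := by
  have hD : ∀ j, D (X j) ∈ idealOfVars (Fin n) K := fun j =>
    (mem_idealOfVars_iff_constantCoeff_eq_zero _).mpr (hconst j)
  refine derivation_ext fun j => eq_zero_of_forall_mem_pow_idealOfVars fun m => ?_
  exact Ideal.pow_le_pow_right m.le_succ
    (D.apply_X_mem_pow_idealOfVars_of_commute Xd hX hcomm hD m j)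

/-- if `X₁, …, Xₙ` are derivations of `K[x₁,…,xₙ]` (char `K` = 0) whose
coefficients have constant terms `δᵢⱼ`, then any derivation `D` commuting with all
the `Xᵢ` and whose coefficients all have zero constant term is zero. In particular,
a derivation commuting with all the `Xᵢ` is determined by the constant terms of its
coefficients. -/
theorem centralizer_determined_by_constant_terms
    {K : Type*} [Field K] [CharZero K] (n : ℕ) (hn : 1 ≤ n)
    (Xd : Fin n → Derivation K (MvPolynomial (Fin n) K) (MvPolynomial (Fin n) K))
    (hX : ∀ i j : Fin n,
      constantCoeff (Xd i (X j)) = if i = j then (1 : K) else 0)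
    (D : Derivation K (MvPolynomial (Fin n) K) (MvPolynomial (Fin n) K))
    (hcomm : ∀ i, ⁅Xd i, D⁆ = 0)
    (hconst : ∀ j, constantCoeff (D (X j)) = 0) :
    D = 0 :=
  centralizer_determined_by_constant_terms_general n Xd hX D hcomm hconst
end

section
/- Let K be a field of characteristic 0 and P = K[x₁,x₂,x₃,x₄,x₅]. Define derivations Y₁ = ∂₁ + x₃∂₄, Y₂ = ∂₂ − x₁∂₃ − (x₁²/2)∂₄ + x₃∂₅ of P. For a derivation Z of P, define the polynomials f¹ = Z(x₁), f² = Z(x₂), f³ = Z(x₃) + x₁·Z(x₂), f⁴ = Z(x₄) − x₃·Z(x₁) + (x₁²/2)·Z(x₂), f⁵ = Z(x₅) − x₃·Z(x₂). Then Z preserves the distribution D, i.e., [Z, Y₁] and [Z, Y₂] lie in the P-submodule P·Y₁ + P·Y₂ of the module of derivations of P, if and only if the following six equations hold: Y₁(f³) = f², Y₂(f³) = −f¹, Y₁(f⁴) = f³, Y₂(f⁴) = 0, Y₁(f⁵) = 0, Y₂(f⁵) = f³. In particular, such a Z is completely determined by the two generating functions f⁴ and f⁵, which satisfy Y₁(f⁵)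 = 0, Y₂(f⁴) = 0, Y₁(f⁴) = Y₂(f⁵). -/
open MvPolynomial

noncomputable section

/-- The polynomial ring `K[x₁,…,x₅]`. -/
abbrev P5 (K : Type*) [Field K] := MvPolynomial (Fin 5) K

/-- Polynomial vector fields on 5-dimensional space: derivations of `K[x₁,…,x₅]`. -/
abbrev Der5 (K : Type*) [Field K] := Derivation K (P5 K) (P5 K)

variable (K : Type*) [Field K] [CharZero K]

/-- `∂ᵢ` as a derivation (0-indexed). -/
def dd (i : Fin 5) : Der5 K := pderiv i

/-- The variable `xᵢ` (0-indexed). -/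
def xx (i : Fin 5) : P5 K := X i

/-- `Y₁ = ∂₁ + x₃∂₄`. -/
def Y1 : Der5 K := dd K 0 + xx K 2 • dd K 3

/-- `Y₂ = ∂₂ − x₁∂₃ − (x₁²/2)∂₄ + x₃∂₅`. -/
def Y2 : Der5 K :=
  dd K 1 - xx K 0 • dd K 2 - (C ((2 : K)⁻¹) * xx K 0 ^ 2) • dd K 3
    + xx K 2 • dd K 4

/-- The distribution `D`: the `P`-submodule `P·Y₁ + P·Y₂` of the module of
derivations of `P`. -/
def DistD : Submodule (P5 K) (Der5 K) :=
  Submodule.span (P5 K) {Y1 K, Y2 K}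

/-- A derivation `Z` preserves the distribution `D` if `[Z,Y₁]` and `[Z,Y₂]`
lie in `P·Y₁ + P·Y₂`. -/
def Preserves (Z : Der5 K) : Prop :=
  ⁅Z, Y1 K⁆ ∈ DistD K ∧ ⁅Z, Y2 K⁆ ∈ DistD K

/-- `f¹ = Z(x₁)`. -/
def f1 (Z : Der5 K) : P5 K := Z (xx K 0)
/-- `f² = Z(x₂)`. -/
def f2 (Z : Der5 K) : P5 K := Z (xx K 1)
/-- `f³ = Z(x₃) + x₁·Z(x₂)`. -/
def f3 (Z : Der5 K) : P5 K := Z (xx K 2) + xx K 0 * Z (xx K 1)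
/-- `f⁴ = Z(x₄) − x₃·Z(x₁) + (x₁²/2)·Z(x₂)`. -/
def f4 (Z : Der5 K) : P5 K :=
  Z (xx K 3) - xx K 2 * Z (xx K 0) + C ((2 : K)⁻¹) * xx K 0 ^ 2 * Z (xx K 1)
/-- `f⁵ = Z(x₅) − x₃·Z(x₂)`. -/
def f5 (Z : Der5 K) : P5 K := Z (xx K 4) - xx K 2 * Z (xx K 1)

/-!
`Y₁, Y₂` span the common kernel of the contact forms `θ³ = dx₃ + x₁dx₂`,
`θ⁴ = dx₄ − x₃dx₁ + (x₁²/2)dx₂`, `θ⁵ = dx₅ − x₃dx₂`, and `fᵏ = θᵏ(Z)`. Hence `Z` preserves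
`D` iff `θᵏ([Z, Yᵢ]) = 0` for all `k, i`. As `θᵏ(Yᵢ) = 0`, Cartan's formula
`θ([Z, Y]) = Z θ(Y) − Y θ(Z) − dθ(Z, Y)` turns these six conditions into the six equations.
The `fᵏ` determine `Z` (they are triangular in the `Z(xᵢ)`), and for `Z` preserving `D` the
equations recover `f³ = Y₁f⁴`, `f² = Y₁f³` and `f¹ = −Y₂f³` from `f⁴`.
-/

lemma MvPolynomial.derivation_C_inv_two_mul_sq {R σ : Type*} [Field R] [NeZero (2 : R)]
    (D : Derivation R (MvPolynomial σ R) (MvPolynomial σ R)) (p : MvPolynomial σ R) :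
    D (C 2⁻¹ * p ^ 2) = p * D p := by
  have h : (C (2⁻¹ : R) : MvPolynomial σ R) * 2 = 1 := by
    rw [← map_ofNat C 2, ← C_mul, inv_mul_cancel₀ two_ne_zero, C_1]
  simp only [Derivation.leibniz, Derivation.leibniz_pow, MvPolynomial.derivation_C, smul_eq_mul,
    mul_zero, add_zero]
  linear_combination p * D p * h

section

omit [CharZero K]

@[simp] lemma Y1_X0 : Y1 K (X 0) = 1 := by simp [Y1, dd, xx, pderiv_X]
@[simp] lemma Y1_X1 : Y1 K (X 1) = 0 := by simp [Y1, dd, xx, pderiv_X]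
@[simp] lemma Y1_X2 : Y1 K (X 2) = 0 := by simp [Y1, dd, xx, pderiv_X]
@[simp] lemma Y1_X3 : Y1 K (X 3) = X 2 := by simp [Y1, dd, xx, pderiv_X]
@[simp] lemma Y1_X4 : Y1 K (X 4) = 0 := by simp [Y1, dd, xx, pderiv_X]
@[simp] lemma Y2_X0 : Y2 K (X 0) = 0 := by simp [Y2, dd, xx, pderiv_X]
@[simp] lemma Y2_X1 : Y2 K (X 1) = 1 := by simp [Y2, dd, xx, pderiv_X]
@[simp] lemma Y2_X2 : Y2 K (X 2) = -X 0 := by simp [Y2, dd, xx, pderiv_X]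
@[simp] lemma Y2_X3 : Y2 K (X 3) = -(C 2⁻¹ * X 0 ^ 2) := by simp [Y2, dd, xx, pderiv_X]
@[simp] lemma Y2_X4 : Y2 K (X 4) = X 2 := by simp [Y2, dd, xx, pderiv_X]

lemma derivation_eq_of_f_eq {Z W : Der5 K} (h1 : f1 K Z = f1 K W) (h2 : f2 K Z = f2 K W)
    (h3 : f3 K Z = f3 K W) (h4 : f4 K Z = f4 K W) (h5 : f5 K Z = f5 K W) : Z = W := by
  simp only [f1, f2, f3, f4, f5, xx] at h1 h2 h3 h4 h5
  refine MvPolynomial.derivation_ext fun i => ?_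
  fin_cases i
  · exact h1
  · exact h2
  · show Z (X 2) = W (X 2)
    linear_combination h3 - X 0 * h2
  · show Z (X 3) = W (X 3)
    linear_combination h4 + X 2 * h1 - C 2⁻¹ * X 0 ^ 2 * h2
  · show Z (X 4) = W (X 4)
    linear_combination h5 + X 2 * h2

lemma f3_f4_f5_smul_Y1_add_smul_Y2 (a b : P5 K) :
    f3 K (a • Y1 K + b • Y2 K) = 0 ∧ f4 K (a • Y1 K + b • Y2 K) = 0 ∧
      f5 K (a • Y1 K + b • Y2 K) = 0 := by
  refine ⟨?_, ?_, ?_⟩ <;>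
    simp only [f3, f4, f5, xx, Derivation.add_apply, Derivation.smul_apply, smul_eq_mul,
      Y1_X0, Y1_X1, Y1_X2, Y1_X3, Y1_X4, Y2_X0, Y2_X1, Y2_X2, Y2_X3, Y2_X4] <;> ring

lemma mem_distD_iff (W : Der5 K) :
    W ∈ DistD K ↔ f3 K W = 0 ∧ f4 K W = 0 ∧ f5 K W = 0 := by
  rw [DistD, Submodule.mem_span_pair]
  constructor
  · rintro ⟨a, b, rfl⟩
    exact f3_f4_f5_smul_Y1_add_smul_Y2 K a b
  · rintro ⟨h3, h4, h5⟩
    obtain ⟨g3, g4, g5⟩ := f3_f4_f5_smul_Y1_add_smul_Y2 K (W (X 0)) (W (X 1))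
    refine ⟨W (X 0), W (X 1), derivation_eq_of_f_eq K ?_ ?_ (g3.trans h3.symm)
      (g4.trans h4.symm) (g5.trans h5.symm)⟩ <;>
      simp [f1, f2, xx]

end

/-- Cartan's formula for the `1`-form `a db`. -/
lemma Derivation.mul_commutator_apply {R A : Type*} [CommRing R] [CommRing A] [Algebra R A]
    (Z Y : Derivation R A A) (a b : A) :
    a * ⁅Z, Y⁆ b = Z (a * Y b) - Y (a * Z b) - (Z a * Y b - Y a * Z b) := by
  simp only [Derivation.commutator_apply, Derivation.leibniz, smul_eq_mul]
  ring

section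

variable (Z : Der5 K)

omit [CharZero K] in
lemma f3_lie_Y1 : f3 K ⁅Z, Y1 K⁆ = f2 K Z - Y1 K (f3 K Z) := by
  simp only [f2, f3, xx, Derivation.mul_commutator_apply]
  simp only [Derivation.commutator_apply, map_add, Y1_X0, Y1_X1, Y1_X2, mul_zero, map_zero]
  ring

lemma f4_lie_Y1 : f4 K ⁅Z, Y1 K⁆ = f3 K Z - Y1 K (f4 K Z) := by
  simp only [f3, f4, xx, Derivation.mul_commutator_apply]
  simp only [Derivation.commutator_apply, map_add, map_sub,
    MvPolynomial.derivation_C_inv_two_mul_sq, Y1_X0, Y1_X1, Y1_X2, Y1_X3, mul_zero, mul_one,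
    map_zero]
  ring

omit [CharZero K] in
lemma f5_lie_Y1 : f5 K ⁅Z, Y1 K⁆ = -Y1 K (f5 K Z) := by
  simp only [f5, xx, Derivation.mul_commutator_apply]
  simp only [Derivation.commutator_apply, map_sub, Y1_X1, Y1_X2, Y1_X4, mul_zero, map_zero]
  ring

omit [CharZero K] in
lemma f3_lie_Y2 : f3 K ⁅Z, Y2 K⁆ = -f1 K Z - Y2 K (f3 K Z) := by
  simp only [f1, f3, xx, Derivation.mul_commutator_apply]
  simp only [Derivation.commutator_apply, map_add, map_neg, Y2_X0, Y2_X1, Y2_X2, mul_one]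
  ring

lemma f4_lie_Y2 : f4 K ⁅Z, Y2 K⁆ = -Y2 K (f4 K Z) := by
  simp only [f4, xx, Derivation.mul_commutator_apply]
  simp only [Derivation.commutator_apply, map_add, map_sub, map_neg,
    MvPolynomial.derivation_C_inv_two_mul_sq, Y2_X0, Y2_X1, Y2_X2, Y2_X3, mul_zero, mul_one,
    map_zero]
  ring

omit [CharZero K] in
lemma f5_lie_Y2 : f5 K ⁅Z, Y2 K⁆ = f3 K Z - Y2 K (f5 K Z) := by
  simp only [f3, f5, xx, Derivation.mul_commutator_apply]
  simp only [Derivation.commutator_apply, map_sub, Y2_X1, Y2_X2, Y2_X4, mul_one]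
  ring

end

lemma preserves_iff (Z : Der5 K) :
    Preserves K Z ↔
      (Y1 K (f3 K Z) = f2 K Z ∧ Y2 K (f3 K Z) = -f1 K Z ∧
       Y1 K (f4 K Z) = f3 K Z ∧ Y2 K (f4 K Z) = 0 ∧
       Y1 K (f5 K Z) = 0 ∧ Y2 K (f5 K Z) = f3 K Z) := by
  simp only [Preserves, mem_distD_iff, f3_lie_Y1, f4_lie_Y1, f5_lie_Y1, f3_lie_Y2, f4_lie_Y2,
    f5_lie_Y2, sub_eq_zero, neg_eq_zero, @eq_comm _ (f2 K Z), @eq_comm _ (f3 K Z),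
    @eq_comm _ (-f1 K Z)]
  simp only [and_assoc, and_left_comm]

/-- a derivation `Z` preserves the distribution `D` iff its
coordinates `f¹,…,f⁵` satisfy the six equations `Y₁(f³) = f²`, `Y₂(f³) = −f¹`,
`Y₁(f⁴) = f³`, `Y₂(f⁴) = 0`, `Y₁(f⁵) = 0`, `Y₂(f⁵) = f³`; in particular such a
`Z` is completely determined by the generating functions `f⁴` and `f⁵`. -/
theorem preserves_iff_generating_equations :
    (∀ Z : Der5 K,
      Preserves K Z ↔
        (Y1 K (f3 K Z) = f2 K Z ∧ Y2 K (f3 K Z) = -f1 K Z ∧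
         Y1 K (f4 K Z) = f3 K Z ∧ Y2 K (f4 K Z) = 0 ∧
         Y1 K (f5 K Z) = 0 ∧ Y2 K (f5 K Z) = f3 K Z)) ∧
    (∀ Z W : Der5 K, Preserves K Z → Preserves K W →
      f4 K Z = f4 K W → f5 K Z = f5 K W → Z = W) := by
  refine ⟨preserves_iff K, fun Z W hZ hW h4 h5 => ?_⟩
  obtain ⟨e2Z, e1Z, e3Z, -⟩ := (preserves_iff K Z).mp hZ
  obtain ⟨e2W, e1W, e3W, -⟩ := (preserves_iff K W).mp hW
  have h3 : f3 K Z = f3 K W := by rw [← e3Z, ← e3W, h4]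
  have h2 : f2 K Z = f2 K W := by rw [← e2Z, ← e2W, h3]
  have h1 : f1 K Z = f1 K W := neg_injective (by rw [← e1Z, ← e1W, h3])
  exact derivation_eq_of_f_eq K h1 h2 h3 h4 h5
end
end

section
/- Let K be a field of characteristic 0 and P = K[x₁,x₂,x₃,x₄,x₅]. Define derivations Y₁ = ∂₁ + x₃∂₄, Y₂ = ∂₂ − x₁∂₃ − (x₁²/2)∂₄ + x₃∂₅ and X₁ = ∂₁ − x₂∂₃ − x₁x₂∂₄ − (x₂²/2)∂₅, X₂ = ∂₂ of P. Assign weights w₁ = w₂ = 1, w₃ = 2, w₄ = w₅ = 3 to x₁,…,x₅. If Z is a derivation of P that is weighted-homogeneous of degree −1 (i.e., Z(xⱼ) is weighted-homogeneous of degree wⱼ − 1 for each j) and Z preserves the distribution D (i.e., [Z,Y₁] and [Z,Y₂] lie in the P-submodule P·Y₁ + P·Y₂ of the module of derivations of P), then Z is a K-linear combination of X₁ and X₂. -/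
open MvPolynomial

noncomputable section

variable (K : Type*) [Field K] [CharZero K]

/-- `X₁ = ∂₁ − x₂∂₃ − x₁x₂∂₄ − (x₂²/2)∂₅`. -/
def X1 : Der5 K :=
  dd K 0 - xx K 1 • dd K 2 - (xx K 0 * xx K 1) • dd K 3
    - (C ((2 : K)⁻¹) * xx K 1 ^ 2) • dd K 4

/-- `X₂ = ∂₂`. -/
def X2 : Der5 K := dd K 1

/-- The weights `w₁ = w₂ = 1`, `w₃ = 2`, `w₄ = w₅ = 3`. -/
def wt : Fin 5 → ℤ := ![1, 1, 2, 3, 3]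

/-- A derivation `Z` is weighted-homogeneous of degree `s` if each coefficient
`Z(xⱼ)` is weighted-homogeneous of degree `wⱼ + s`. -/
def WtHom (s : ℤ) (Z : Der5 K) : Prop :=
  ∀ j : Fin 5, IsWeightedHomogeneous wt (Z (xx K j)) (wt j + s)

private lemma wdeg5 (m : Fin 5 →₀ ℕ) :
    (Finsupp.weight wt) m = (m 0 : ℤ) + m 1 + 2 * m 2 + 3 * m 3 + 3 * m 4 := by
  rw [Finsupp.weight_apply, Finsupp.sum_fintype _ _ (fun i => by simp)]
  simp [Fin.sum_univ_five, wt]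
  ring

private lemma eq_single5 {d : Fin 5 →₀ ℕ} {i : Fin 5} {k : ℕ}
    (h : ∀ j : Fin 5, d j = if i = j then k else 0) : Finsupp.single i k = d :=
  Finsupp.ext fun j => by rw [Finsupp.single_apply, h j]

variable {K} in
private lemma hom0 {p : P5 K} (h : IsWeightedHomogeneous wt p 0) : ∃ a : K, p = C a := by
  refine ⟨coeff 0 p, ?_⟩
  ext d
  rw [coeff_C]
  by_cases hd : (0 : Fin 5 →₀ ℕ) = d
  · subst hd; simp
  · rw [if_neg hd, h.coeff_eq_zero d]
    intro hw'
    rw [wdeg5] at hw'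
    exact hd (Finsupp.ext fun j => by fin_cases j <;> simp <;> omega).symm

variable {K} in
private lemma hom1 {p : P5 K} (h : IsWeightedHomogeneous wt p 1) :
    ∃ a b : K, p = C a * X 0 + C b * X 1 := by
  refine ⟨coeff (Finsupp.single 0 1) p, coeff (Finsupp.single 1 1) p, ?_⟩
  ext d
  rw [coeff_add, coeff_C_mul, coeff_C_mul, coeff_X', coeff_X']
  by_cases h0 : Finsupp.single (0 : Fin 5) 1 = d
  · subst h0
    rw [if_pos rfl, if_neg (by intro hh; exact absurd (DFunLike.congr_fun hh 0) (by simp))]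
    ring
  by_cases h1 : Finsupp.single (1 : Fin 5) 1 = d
  · subst h1
    rw [if_pos rfl, if_neg (by intro hh; exact absurd (DFunLike.congr_fun hh 0) (by simp))]
    ring
  · rw [if_neg h0, if_neg h1, h.coeff_eq_zero d]
    · ring
    intro hw'
    rw [wdeg5] at hw'
    have hc : (d 0 = 1 ∧ d 1 = 0 ∧ d 2 = 0 ∧ d 3 = 0 ∧ d 4 = 0) ∨
        (d 0 = 0 ∧ d 1 = 1 ∧ d 2 = 0 ∧ d 3 = 0 ∧ d 4 = 0) := by omega
    rcases hc with ⟨e0,e1,e2,e3,e4⟩ | ⟨e0,e1,e2,e3,e4⟩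
    · exact h0 (eq_single5 fun j => by fin_cases j <;> simp [e0,e1,e2,e3,e4])
    · exact h1 (eq_single5 fun j => by fin_cases j <;> simp [e0,e1,e2,e3,e4])

variable {K} in
private lemma hom2 {p : P5 K} (h : IsWeightedHomogeneous wt p 2) :
    ∃ a b c e : K, p = C a * X 0 ^ 2 + C b * (X 0 * X 1) + C c * X 1 ^ 2 + C e * X 2 := by
  have m2eq : ∀ b : K, C b * (X 0 * X 1) =
      monomial (Finsupp.single (0 : Fin 5) 1 + Finsupp.single 1 1) b := by
    intro b
    rw [show (X 0 * X 1 : P5 K) = monomial (Finsupp.single (0:Fin 5) 1 + Finsupp.single 1 1) 1 by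
      simp [X, monomial_mul], C_mul_monomial, mul_one]
  have m4eq : ∀ e : K, (C e * X 2 : P5 K) = monomial (Finsupp.single (2 : Fin 5) 1) e := by
    intro e; rw [show (X 2 : P5 K) = X 2 ^ 1 by ring, C_mul_X_pow_eq_monomial]
  refine ⟨coeff (Finsupp.single 0 2) p, coeff (Finsupp.single 0 1 + Finsupp.single 1 1) p,
    coeff (Finsupp.single 1 2) p, coeff (Finsupp.single 2 1) p, ?_⟩
  rw [C_mul_X_pow_eq_monomial, C_mul_X_pow_eq_monomial, m2eq, m4eq]
  ext d
  rw [coeff_add, coeff_add, coeff_add, coeff_monomial, coeff_monomial, coeff_monomial,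
    coeff_monomial]
  by_cases h1 : Finsupp.single (0 : Fin 5) 2 = d
  · subst h1
    rw [if_pos rfl, if_neg (by intro hh; exact absurd (DFunLike.congr_fun hh 0) (by simp)),
      if_neg (by intro hh; exact absurd (DFunLike.congr_fun hh 0) (by simp)),
      if_neg (by intro hh; exact absurd (DFunLike.congr_fun hh 0) (by simp))]
    ring
  by_cases h2 : Finsupp.single (0 : Fin 5) 1 + Finsupp.single 1 1 = d
  · subst h2
    rw [if_neg h1, if_pos rfl,
      if_neg (by intro hh; exact absurd (DFunLike.congr_fun hh 0) (by simp)),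
      if_neg (by intro hh; exact absurd (DFunLike.congr_fun hh 0) (by simp))]
    ring
  by_cases h3 : Finsupp.single (1 : Fin 5) 2 = d
  · subst h3
    rw [if_neg h1, if_neg h2, if_pos rfl,
      if_neg (by intro hh; exact absurd (DFunLike.congr_fun hh 1) (by simp))]
    ring
  by_cases h4 : Finsupp.single (2 : Fin 5) 1 = d
  · subst h4
    rw [if_neg h1, if_neg h2, if_neg h3, if_pos rfl]
    ring
  · rw [if_neg h1, if_neg h2, if_neg h3, if_neg h4, h.coeff_eq_zero d]
    · ring
    intro hw'
    rw [wdeg5] at hw'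
    have hc : (d 0 = 2 ∧ d 1 = 0 ∧ d 2 = 0 ∧ d 3 = 0 ∧ d 4 = 0) ∨
        (d 0 = 1 ∧ d 1 = 1 ∧ d 2 = 0 ∧ d 3 = 0 ∧ d 4 = 0) ∨
        (d 0 = 0 ∧ d 1 = 2 ∧ d 2 = 0 ∧ d 3 = 0 ∧ d 4 = 0) ∨
        (d 0 = 0 ∧ d 1 = 0 ∧ d 2 = 1 ∧ d 3 = 0 ∧ d 4 = 0) := by omega
    rcases hc with ⟨e0,e1,e2,e3,e4⟩ | ⟨e0,e1,e2,e3,e4⟩ | ⟨e0,e1,e2,e3,e4⟩ | ⟨e0,e1,e2,e3,e4⟩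
    · exact h1 (eq_single5 fun j => by fin_cases j <;> simp [e0,e1,e2,e3,e4])
    · refine h2 (Finsupp.ext fun j => ?_)
      fin_cases j <;> simp [Finsupp.single_apply, e0,e1,e2,e3,e4]
    · exact h3 (eq_single5 fun j => by fin_cases j <;> simp [e0,e1,e2,e3,e4])
    · exact h4 (eq_single5 fun j => by fin_cases j <;> simp [e0,e1,e2,e3,e4])

set_option maxHeartbeats 2000000 in
/-- any derivation of weighted degree `−1` preserving the
distribution `D` is a `K`-linear combination of `X₁` and `X₂`. -/
theorem degree_neg_one_component :
    ∀ Z : Der5 K, WtHom K (-1) Z → Preserves K Z →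
      ∃ a b : K, Z = a • X1 K + b • X2 K := by
  intro Z hwt hpr
  have hZC : ∀ c : K, Z (C c) = 0 := fun c => by
    rw [show (C c : P5 K) = algebraMap K (P5 K) c from rfl, Derivation.map_algebraMap]
  obtain ⟨a, hZ0⟩ := hom0 (p := Z (X 0)) (by have := hwt 0; norm_num [wt, xx] at this; exact this)
  obtain ⟨b, hZ1⟩ := hom0 (p := Z (X 1)) (by have := hwt 1; norm_num [wt, xx] at this; exact this)
  obtain ⟨u, v, hZ2⟩ := hom1 (p := Z (X 2)) (by have := hwt 2; norm_num [wt, xx] at this; exact this)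
  obtain ⟨c1, c2, c3, c4, hZ3⟩ := hom2 (p := Z (X 3))
    (by have := hwt 3; norm_num [wt, xx] at this; exact this)
  obtain ⟨d1, d2, d3, d4, hZ4⟩ := hom2 (p := Z (X 4))
    (by have := hwt 4; norm_num [wt, xx] at this; exact this)
  obtain ⟨f, g, hfg⟩ := Submodule.mem_span_pair.mp
    (show ⁅Z, Y1 K⁆ ∈ Submodule.span (P5 K) {Y1 K, Y2 K} from hpr.1)
  obtain ⟨f', g', hfg'⟩ := Submodule.mem_span_pair.mp
    (show ⁅Z, Y2 K⁆ ∈ Submodule.span (P5 K) {Y1 K, Y2 K} from hpr.2)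
  have app : ∀ (D E : Der5 K), D = E → ∀ j : Fin 5, D (X j) = E (X j) :=
    fun D E h j => by rw [h]
  have hf : f = 0 := by
    have e := app _ _ hfg 0
    simpa [Derivation.commutator_apply, Y1, Y2, dd, xx, hZ0, hZ1, hZ2, hZ3, hZ4, hZC,
      smul_eq_mul] using e
  have hg : g = 0 := by
    have e := app _ _ hfg 1
    simpa [Derivation.commutator_apply, Y1, Y2, dd, xx, hZ0, hZ1, hZ2, hZ3, hZ4, hZC,
      smul_eq_mul] using e
  have hf' : f' = 0 := by
    have e := app _ _ hfg' 0
    simpa [Derivation.commutator_apply, Y1, Y2, dd, xx, hZ0, hZ1, hZ2, hZ3, hZ4, hZC,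
      smul_eq_mul] using e
  have hg' : g' = 0 := by
    have e := app _ _ hfg' 1
    simpa [Derivation.commutator_apply, Y1, Y2, dd, xx, hZ0, hZ1, hZ2, hZ3, hZ4, hZC,
      smul_eq_mul] using e
  subst hf hg hf' hg'
  have E2 := app _ _ hfg 2
  have E3 := app _ _ hfg 3
  have E4 := app _ _ hfg 4
  have F2 := app _ _ hfg' 2
  have F3 := app _ _ hfg' 3
  have F4 := app _ _ hfg' 4
  simp [Derivation.commutator_apply, Y1, Y2, dd, xx, hZ0, hZ1, hZ2, hZ3, hZ4, hZC,
    smul_eq_mul] at E2 E3 E4 F2 F3 F4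
  have e31 := congrArg (aeval (![1,0,0,0,0] : Fin 5 → K)) E3
  have e32 := congrArg (aeval (![0,1,0,0,0] : Fin 5 → K)) E3
  have e41 := congrArg (aeval (![1,0,0,0,0] : Fin 5 → K)) E4
  have e42 := congrArg (aeval (![0,1,0,0,0] : Fin 5 → K)) E4
  have f21 := congrArg (aeval (![1,0,0,0,0] : Fin 5 → K)) F2
  have f31 := congrArg (aeval (![1,0,0,0,0] : Fin 5 → K)) F3
  have f32 := congrArg (aeval (![0,1,0,0,0] : Fin 5 → K)) F3
  have f41 := congrArg (aeval (![1,0,0,0,0] : Fin 5 → K)) F4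
  have f42 := congrArg (aeval (![0,1,0,0,0] : Fin 5 → K)) F4
  simp at e31 e32 e41 e42 f21 f31 f32 f41 f42
  have hv : v = -a := by linear_combination f21
  have hc1 : c1 = 0 := by linear_combination (E2 + e31) / 2
  have hc2 : c2 = -a := by linear_combination e32 + f21
  have hc4 : c4 = 0 := by linear_combination -f31 + e32 + f21
  have hd4 : d4 = 0 := by linear_combination -f41 - E2 + e42
  have hd3 : d3 = -(2⁻¹ * a) := by linear_combination (f42 + f21) / 2
  subst E2 hv hc1 hc2 f32 hc4 e41 e42 hd3 hd4
  refine ⟨a, b, MvPolynomial.derivation_ext fun i => ?_⟩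
  fin_cases i <;>
    simp [X1, X2, dd, xx, hZ0, hZ1, hZ2, hZ3, hZ4, smul_eq_C_mul, map_neg, map_mul,
      Derivation.smul_apply] <;>
    ring


end
end

section
/- Let K be a field of characteristic 0, n ≥ 1, and P = K[p₁,…,pₙ,q₁,…,qₙ,t]. Define derivations Y_{pᵢ} = ∂_{pᵢ} + qᵢ∂_t and Y_{qᵢ} = ∂_{qᵢ} − pᵢ∂_t of P. Suppose f ∈ P satisfies: Y_{pᵢ}Y_{pⱼ}(f) = 0 and Y_{qᵢ}Y_{qⱼ}(f) = 0 for all i, j; Y_{pᵢ}Y_{qⱼ}(f) = 0 for all i ≠ j; and (Y_{pᵢ}Y_{qᵢ} + Y_{qᵢ}Y_{pᵢ})(f) = 0 for all i. Then f lies in the K-linear span of {1, p₁,…,pₙ, q₁,…,qₙ, t}. (Consequently, the partial prolong of the negative part of the contact algebra together with the one-dimensional subalgebra K·K_t of its zeroth component adds no new positive components.) -/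
/-!
The brackets `[∂_t, Y_{pᵢ}] = [∂_t, Y_{qᵢ}] = 0` and `[Y_{qᵢ}, Y_{pᵢ}] = 2∂_t` turn the mixed
hypothesis into `Y_{qᵢ}Y_{pᵢ} f = ∂_t f`, and then `Y_{pᵢ}Y_{pᵢ} f = 0`, `Y_{qᵢ}Y_{qᵢ} f = 0` into
`∂_t Y_{pᵢ} f = ∂_t Y_{qᵢ} f = 0` (after cancelling a factor 3). Also
`∂_t² f = Y_{qᵢ} ∂_t Y_{pᵢ} f = 0`, so all first partials of `∂_t f` vanish and `∂_t f` is a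
constant `c`. Then each `Y_a Y_b f` is the plain second partial `∂_a ∂_b f`, shifted by `c` for
`Y_{pᵢ}Y_{qᵢ}`; so all second partials of `f` vanish and `f` is affine.
-/

open MvPolynomial

noncomputable section

/-- Index type for the variables `p₁,…,pₙ,q₁,…,qₙ,t`. -/
abbrev CIdx (n : ℕ) := Fin n ⊕ (Fin n ⊕ Unit)

/-- The polynomial ring `K[p₁,…,pₙ,q₁,…,qₙ,t]`. -/
abbrev PC (K : Type*) [Field K] (n : ℕ) := MvPolynomial (CIdx n) K

/-- Polynomial vector fields: derivations of `K[p₁,…,pₙ,qₙ,…,qₙ,t]`. -/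
abbrev DerC (K : Type*) [Field K] (n : ℕ) := Derivation K (PC K n) (PC K n)

variable (K : Type*) [Field K] [CharZero K] (n : ℕ)

/-- The variable `pᵢ`. -/
def pV (i : Fin n) : PC K n := X (Sum.inl i)
/-- The variable `qᵢ`. -/
def qV (i : Fin n) : PC K n := X (Sum.inr (Sum.inl i))
/-- The variable `t`. -/
def tV : PC K n := X (Sum.inr (Sum.inr ()))

/-- `∂_{pᵢ}`. -/
def dp (i : Fin n) : DerC K n := pderiv (Sum.inl i)
/-- `∂_{qᵢ}`. -/
def dq (i : Fin n) : DerC K n := pderiv (Sum.inr (Sum.inl i))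
/-- `∂_t`. -/
def dt : DerC K n := pderiv (Sum.inr (Sum.inr ()))

/-- `Y_{pᵢ} = ∂_{pᵢ} + qᵢ∂_t`. -/
def Yp (i : Fin n) : DerC K n := dp K n i + qV K n i • dt K n
/-- `Y_{qᵢ} = ∂_{qᵢ} − pᵢ∂_t`. -/
def Yq (i : Fin n) : DerC K n := dq K n i - pV K n i • dt K n

namespace MvPolynomial

variable {σ R : Type*} [CommRing R]

theorem pderiv_pderiv_comm (i j : σ) (f : MvPolynomial σ R) :
    pderiv i (pderiv j f) = pderiv j (pderiv i f) := by
  have h : ⁅pderiv i, pderiv j⁆ = (0 : Derivation R (MvPolynomial σ R) (MvPolynomial σ R)) :=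
    derivation_ext fun k => by
      classical
      rw [Derivation.commutator_apply, pderiv_X, pderiv_X, Pi.single_apply, Pi.single_apply]
      split_ifs <;> simp
  rw [← sub_eq_zero, ← Derivation.commutator_apply, h, Derivation.zero_apply]

theorem pderiv_ext [IsAddTorsionFree R] {f g : MvPolynomial σ R}
    (hd : ∀ i, pderiv i f = pderiv i g) (hc : coeff 0 f = coeff 0 g) : f = g := by
  rw [← coe_inj]
  refine MvPowerSeries.pderiv.ext (fun i => ?_) ?_
  · simp only [MvPowerSeries.pderiv_coe, hd]
  · simpa [← MvPowerSeries.coeff_zero_eq_constantCoeff_apply, coeff_coe] using hc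

theorem eq_C_of_pderiv_eq_zero [IsAddTorsionFree R] {f : MvPolynomial σ R}
    (h : ∀ i, pderiv i f = 0) : f = C (coeff 0 f) :=
  pderiv_ext (fun i => by rw [h, pderiv_C]) (coeff_zero_C _).symm

theorem mem_span_one_X_of_pderiv_pderiv_eq_zero [Fintype σ] [IsAddTorsionFree R]
    {f : MvPolynomial σ R} (h : ∀ i j, pderiv i (pderiv j f) = 0) :
    f ∈ Submodule.span R (insert 1 (Set.range X)) := by
  classical
  have hf : f = coeff 0 f • 1 + ∑ j, coeff 0 (pderiv j f) • X j := by
    refine pderiv_ext (fun i => ?_) ?_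
    · simp only [map_add, map_sum, Derivation.map_smul, pderiv_one, pderiv_X, Pi.single_apply]
      simp only [smul_zero, smul_ite, Finset.sum_ite_eq', Finset.mem_univ, if_true, zero_add]
      rw [smul_eq_C_mul, mul_one]
      exact eq_C_of_pderiv_eq_zero (h · i)
    · simp [coeff_sum]
  rw [hf]
  exact add_mem (Submodule.smul_mem _ _ (Submodule.subset_span (.inl rfl)))
    (Submodule.sum_mem _ fun j _ => Submodule.smul_mem _ _ (Submodule.subset_span (.inr ⟨j, rfl⟩)))

end MvPolynomial

section

omit [CharZero K]

variable {K n}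

theorem Yp_apply (i : Fin n) (g : PC K n) : Yp K n i g = dp K n i g + qV K n i * dt K n g := rfl

theorem Yq_apply (i : Fin n) (g : PC K n) : Yq K n i g = dq K n i g - pV K n i * dt K n g := rfl

theorem lie_dt_Yp (i : Fin n) : ⁅dt K n, Yp K n i⁆ = 0 := by
  refine derivation_ext fun a => ?_
  rcases a with j | j | ⟨⟩ <;>
    simp [Derivation.commutator_apply, Yp_apply, dt, dp, qV, pderiv_X, Pi.single_apply,
      apply_ite (pderiv _)]

theorem lie_dt_Yq (i : Fin n) : ⁅dt K n, Yq K n i⁆ = 0 := by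
  refine derivation_ext fun a => ?_
  rcases a with j | j | ⟨⟩ <;>
    simp [Derivation.commutator_apply, Yq_apply, dt, dq, pV, pderiv_X, Pi.single_apply,
      apply_ite (pderiv _)]

theorem lie_Yq_Yp (i : Fin n) : ⁅Yq K n i, Yp K n i⁆ = (2 : PC K n) • dt K n := by
  refine derivation_ext fun a => ?_
  rcases a with j | j | ⟨⟩ <;>
    simp [Derivation.commutator_apply, Yp_apply, Yq_apply, dt, dp, dq, pV, qV, pderiv_X,
      Pi.single_apply, apply_ite (pderiv _), one_add_one_eq_two]

theorem dt_Yp_comm (i : Fin n) (g : PC K n) : dt K n (Yp K n i g) = Yp K n i (dt K n g) := by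
  rw [← sub_eq_zero, ← Derivation.commutator_apply, lie_dt_Yp, Derivation.zero_apply]

theorem dt_Yq_comm (i : Fin n) (g : PC K n) : dt K n (Yq K n i g) = Yq K n i (dt K n g) := by
  rw [← sub_eq_zero, ← Derivation.commutator_apply, lie_dt_Yq, Derivation.zero_apply]

theorem Yq_Yp_self_apply (i : Fin n) (g : PC K n) :
    Yq K n i (Yp K n i g) = Yp K n i (Yq K n i g) + 2 * dt K n g := by
  rw [← sub_eq_iff_eq_add', ← Derivation.commutator_apply, lie_Yq_Yp, Derivation.smul_apply,
    smul_eq_mul]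

variable {f : PC K n} {c : K}

theorem dt_Yp_of_dt_eq_C (hc : dt K n f = C c) (j : Fin n) : dt K n (Yp K n j f) = 0 := by
  rw [dt_Yp_comm, hc, ← algebraMap_eq, Derivation.map_algebraMap]

theorem dt_Yq_of_dt_eq_C (hc : dt K n f = C c) (j : Fin n) : dt K n (Yq K n j f) = 0 := by
  rw [dt_Yq_comm, hc, ← algebraMap_eq, Derivation.map_algebraMap]

theorem Yp_Yp_of_dt_eq_C (hc : dt K n f = C c) (i j : Fin n) :
    Yp K n i (Yp K n j f) = dp K n i (dp K n j f) := by
  rw [Yp_apply i, dt_Yp_of_dt_eq_C hc, Yp_apply, hc]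
  simp [dp, qV, pderiv_X]

theorem Yq_Yq_of_dt_eq_C (hc : dt K n f = C c) (i j : Fin n) :
    Yq K n i (Yq K n j f) = dq K n i (dq K n j f) := by
  rw [Yq_apply i, dt_Yq_of_dt_eq_C hc, Yq_apply, hc]
  simp [dq, pV, pderiv_X]

theorem Yp_Yq_of_dt_eq_C (hc : dt K n f = C c) (i j : Fin n) :
    Yp K n i (Yq K n j f) = dp K n i (dq K n j f) - if i = j then C c else 0 := by
  rw [Yp_apply i, dt_Yq_of_dt_eq_C hc, Yq_apply, hc]
  simp [dp, pV, pderiv_X, Pi.single_apply, eq_comm]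

end

section

variable {K n} {f : PC K n}

theorem Yq_Yp_self_eq_dt {i : Fin n}
    (hmix : Yp K n i (Yq K n i f) + Yq K n i (Yp K n i f) = 0) :
    Yq K n i (Yp K n i f) = dt K n f := by
  have h : (2 : PC K n) * (Yq K n i (Yp K n i f) - dt K n f) = 0 := by
    linear_combination Yq_Yp_self_apply i f + hmix
  exact sub_eq_zero.1 ((mul_eq_zero.1 h).resolve_left two_ne_zero)

theorem dt_Yp_eq_zero {i : Fin n} (hpp : Yp K n i (Yp K n i f) = 0)
    (hmix : Yp K n i (Yq K n i f) + Yq K n i (Yp K n i f) = 0) : dt K n (Yp K n i f) = 0 := by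
  have h := Yq_Yp_self_apply i (Yp K n i f)
  rw [hpp, map_zero, Yq_Yp_self_eq_dt hmix, ← dt_Yp_comm] at h
  have h3 : (3 : PC K n) * dt K n (Yp K n i f) = 0 := by linear_combination -h
  exact (mul_eq_zero.1 h3).resolve_left (by norm_num)

theorem dt_Yq_eq_zero {i : Fin n} (hqq : Yq K n i (Yq K n i f) = 0)
    (hmix : Yp K n i (Yq K n i f) + Yq K n i (Yp K n i f) = 0) : dt K n (Yq K n i f) = 0 := by
  have h := Yq_Yp_self_apply i (Yq K n i f)
  rw [hqq, map_zero, eq_neg_of_add_eq_zero_left hmix, Yq_Yp_self_eq_dt hmix, map_neg,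
    ← dt_Yq_comm] at h
  have h3 : (3 : PC K n) * dt K n (Yq K n i f) = 0 := by linear_combination -h
  exact (mul_eq_zero.1 h3).resolve_left (by norm_num)

theorem pderiv_dt_eq_zero (i₀ : Fin n) (hpp : ∀ i, Yp K n i (Yp K n i f) = 0)
    (hqq : ∀ i, Yq K n i (Yq K n i f) = 0)
    (hmix : ∀ i, Yp K n i (Yq K n i f) + Yq K n i (Yp K n i f) = 0) (a : CIdx n) :
    pderiv a (dt K n f) = 0 := by
  have hdtt : dt K n (dt K n f) = 0 := by
    rw [← Yq_Yp_self_eq_dt (hmix i₀), dt_Yq_comm, dt_Yp_eq_zero (hpp i₀) (hmix i₀), map_zero]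
  rcases a with j | j | ⟨⟩
  · have h := dt_Yp_eq_zero (hpp j) (hmix j)
    rwa [dt_Yp_comm, Yp_apply, hdtt, mul_zero, add_zero] at h
  · have h := dt_Yq_eq_zero (hqq j) (hmix j)
    rwa [dt_Yq_comm, Yq_apply, hdtt, mul_zero, sub_zero] at h
  · exact hdtt

theorem pderiv_pderiv_eq_zero {c : K} (hc : dt K n f = C c)
    (hpp : ∀ i j, Yp K n i (Yp K n j f) = 0) (hqq : ∀ i j, Yq K n i (Yq K n j f) = 0)
    (hpq : ∀ i j, i ≠ j → Yp K n i (Yq K n j f) = 0)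
    (hmix : ∀ i, Yp K n i (Yq K n i f) + Yq K n i (Yp K n i f) = 0) (a b : CIdx n) :
    pderiv a (pderiv b f) = 0 := by
  have hdt (a : CIdx n) : pderiv a (dt K n f) = 0 := by rw [hc, pderiv_C]
  have hdpdq (i j : Fin n) : dp K n i (dq K n j f) = 0 := by
    have h := Yp_Yq_of_dt_eq_C hc i j
    rcases eq_or_ne i j with rfl | hij
    · rw [eq_neg_of_add_eq_zero_left (hmix i), Yq_Yp_self_eq_dt (hmix i), hc, if_pos rfl] at h
      linear_combination -h
    · rwa [hpq i j hij, if_neg hij, sub_zero, eq_comm] at h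
  rcases a with i | i | ⟨⟩ <;> rcases b with j | j | ⟨⟩
  · exact (Yp_Yp_of_dt_eq_C hc i j).symm.trans (hpp i j)
  · exact hdpdq i j
  · exact hdt _
  · rw [pderiv_pderiv_comm]; exact hdpdq j i
  · exact (Yq_Yq_of_dt_eq_C hc i j).symm.trans (hqq i j)
  all_goals first | exact hdt _ | rw [pderiv_pderiv_comm]; exact hdt _

end

/-- if `f` is annihilated by all second-order operators
`Y_{pᵢ}Y_{pⱼ}`, `Y_{qᵢ}Y_{qⱼ}`, `Y_{pᵢ}Y_{qⱼ}` (`i ≠ j`) and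
`Y_{pᵢ}Y_{qᵢ} + Y_{qᵢ}Y_{pᵢ}`, then `f` lies in the span of
`{1, p₁,…,pₙ, q₁,…,qₙ, t}`; consequently the partial prolong of the negative
part of the contact algebra together with `K·K_t` adds no new positive
components. -/
theorem prolong_of_center_is_trivial (hn : 1 ≤ n) (f : PC K n)
    (hpp : ∀ i j : Fin n, Yp K n i (Yp K n j f) = 0)
    (hqq : ∀ i j : Fin n, Yq K n i (Yq K n j f) = 0)
    (hpq : ∀ i j : Fin n, i ≠ j → Yp K n i (Yq K n j f) = 0)
    (hmix : ∀ i : Fin n, Yp K n i (Yq K n i f) + Yq K n i (Yp K n i f) = 0) :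
    f ∈ Submodule.span K
      ({1, tV K n} ∪ Set.range (pV K n) ∪ Set.range (qV K n)) := by
  have hc := eq_C_of_pderiv_eq_zero <|
    pderiv_dt_eq_zero ⟨0, hn⟩ (fun i => hpp i i) (fun i => hqq i i) hmix
  refine Submodule.span_mono ?_ <|
    mem_span_one_X_of_pderiv_pderiv_eq_zero (pderiv_pderiv_eq_zero hc hpp hqq hpq hmix)
  rintro _ (rfl | ⟨i | i | ⟨⟩, rfl⟩)
  · simp
  · exact .inl (.inr ⟨i, rfl⟩)
  · exact .inr ⟨i, rfl⟩
  · simp [tV]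

end
end

section
/- Let K be a field of characteristic 0, n ≥ 1, and P = K[x₁,…,xₙ]. Let E = Σⱼ xⱼ∂ⱼ be the Euler field and, for a derivation D = Σ_k f^k ∂_k of P, let Div D = Σ_k ∂_k(f^k). Then every derivation D of P whose coefficients f^k = D(x_k) are all homogeneous polynomials of degree 2 decomposes uniquely as D = Σᵢ cᵢ·(xᵢE) + D₀, where cᵢ ∈ K and D₀ is a derivation with degree-2 homogeneous coefficients satisfying Div D₀ = 0. That is, the degree-1 component of the Lie algebra of polynomial vector fields (in the standard grading) is the direct sum of the span of the fields xᵢE, i = 1,…,n, and the space of divergence-free fields with quadratic coefficients. -/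
/-! For a linear form `ℓ`, `Div (ℓ E) = ℓ Div E + E ℓ = n ℓ + ℓ`, by the product rule
`Div (f D) = f Div D + D f` and Euler's identity `E ℓ = ℓ`. The divergence of a field with
quadratic coefficients is a linear form, so `D = ℓ E + D₀` with `Div D₀ = 0` holds exactly when
`(n + 1) ℓ = Div D`; the coefficients `cᵢ` of `ℓ` are then unique because the `xᵢ` are linearly
independent. -/

open MvPolynomial

noncomputable section

variable (K : Type*) [Field K] [CharZero K] (n : ℕ)

/-- The Euler vector field `E = Σⱼ xⱼ∂ⱼ` as a derivation of `K[x₁,…,xₙ]`. -/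
def Euler : Derivation K (MvPolynomial (Fin n) K) (MvPolynomial (Fin n) K) :=
  ∑ j, (X j : MvPolynomial (Fin n) K) • pderiv j

/-- The divergence `Div D = Σₖ ∂ₖ(D(xₖ))` of a polynomial vector field. -/
def Divg (D : Derivation K (MvPolynomial (Fin n) K) (MvPolynomial (Fin n) K)) :
    MvPolynomial (Fin n) K :=
  ∑ k, pderiv k (D (X k))

theorem Derivation.sum_apply {ι R A M : Type*} [CommSemiring R] [CommSemiring A] [Algebra R A]
    [AddCommMonoid M] [Module A M] [Module R M] (s : Finset ι) (D : ι → Derivation R A M) (a : A) :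
    (∑ i ∈ s, D i) a = ∑ i ∈ s, D i a := by
  rw [← Derivation.coeFnAddMonoidHom_apply, map_sum, Finset.sum_apply]
  rfl

namespace MvPolynomial

variable {σ R : Type*} [Fintype σ] [CommSemiring R]

theorem isHomogeneous_one_iff {p : MvPolynomial σ R} :
    p.IsHomogeneous 1 ↔ ∃ c : σ → R, ∑ i, c i • X i = p := by
  rw [← mem_homogeneousSubmodule, homogeneousSubmodule_one_eq_span_X,
    Submodule.mem_span_range_iff_exists_fun]

theorem existsUnique_sum_smul_X_eq {p : MvPolynomial σ R} (hp : p.IsHomogeneous 1) :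
    ∃! c : σ → R, ∑ i, c i • X i = p := by
  obtain ⟨c, rfl⟩ := isHomogeneous_one_iff.mp hp
  exact ⟨c, rfl, fun c' h =>
    _root_.funext (Fintype.linearIndependent_iffₛ.mp (linearIndependent_X σ R) c' c h)⟩

theorem derivation_apply_eq_sum_mul_pderiv
    (D : Derivation R (MvPolynomial σ R) (MvPolynomial σ R)) (f : MvPolynomial σ R) :
    D f = ∑ k, D (X k) * pderiv k f := by
  classical
  suffices D = ∑ k, D (X k) • pderiv k by
    conv_lhs => rw [this]
    simp [Derivation.sum_apply]
  refine derivation_ext fun i => ?_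
  simp [Derivation.sum_apply, pderiv_X, Pi.single_apply]

end MvPolynomial

section

omit [CharZero K]

theorem Euler_apply (p : MvPolynomial (Fin n) K) : Euler K n p = ∑ j, X j * pderiv j p := by
  simp [Euler, Derivation.sum_apply]

theorem Euler_apply_of_isHomogeneous {p : MvPolynomial (Fin n) K} {m : ℕ}
    (hp : p.IsHomogeneous m) : Euler K n p = m • p :=
  (Euler_apply K n p).trans hp.sum_X_mul_pderiv

theorem Divg_add (D₁ D₂ : Derivation K (MvPolynomial (Fin n) K) (MvPolynomial (Fin n) K)) :
    Divg K n (D₁ + D₂) = Divg K n D₁ + Divg K n D₂ := by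
  simp [Divg, Finset.sum_add_distrib]

theorem Divg_smul (f : MvPolynomial (Fin n) K)
    (D : Derivation K (MvPolynomial (Fin n) K) (MvPolynomial (Fin n) K)) :
    Divg K n (f • D) = f * Divg K n D + D f := by
  rw [Divg, Divg, derivation_apply_eq_sum_mul_pderiv D f, Finset.mul_sum, ← Finset.sum_add_distrib]
  refine Finset.sum_congr rfl fun k _ => ?_
  rw [Derivation.smul_apply, smul_eq_mul, pderiv_mul]
  ring

theorem Divg_Euler : Divg K n (Euler K n) = n := by
  simp [Divg, Euler_apply_of_isHomogeneous K n (isHomogeneous_X K _)]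

theorem Divg_smul_Euler_of_isHomogeneous {ℓ : MvPolynomial (Fin n) K} {m : ℕ}
    (hℓ : ℓ.IsHomogeneous m) : Divg K n (ℓ • Euler K n) = (n + m) • ℓ := by
  rw [Divg_smul, Divg_Euler, Euler_apply_of_isHomogeneous K n hℓ, add_smul, nsmul_eq_mul,
    nsmul_eq_mul, mul_comm]

theorem sum_smul_X_smul_Euler (c : Fin n → K) :
    ∑ i, c i • ((X i : MvPolynomial (Fin n) K) • Euler K n) =
      (∑ i, c i • (X i : MvPolynomial (Fin n) K)) • Euler K n := by
  simp [Finset.sum_smul, smul_assoc]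

theorem isHomogeneous_Divg {D : Derivation K (MvPolynomial (Fin n) K) (MvPolynomial (Fin n) K)}
    {m : ℕ} (hD : ∀ k, (D (X k)).IsHomogeneous (m + 1)) : (Divg K n D).IsHomogeneous m :=
  IsHomogeneous.sum _ _ _ fun k _ => (hD k).pderiv

theorem sum_smul_X_smul_Euler_apply_X (c : Fin n → K) (k : Fin n) :
    (∑ i, c i • ((X i : MvPolynomial (Fin n) K) • Euler K n)) (X k) = (∑ i, c i • X i) * X k := by
  rw [sum_smul_X_smul_Euler, Derivation.smul_apply, smul_eq_mul,
    Euler_apply_of_isHomogeneous K n (isHomogeneous_X K k), one_smul]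

theorem Divg_sum_smul_X_smul_Euler_add (c : Fin n → K)
    (D₀ : Derivation K (MvPolynomial (Fin n) K) (MvPolynomial (Fin n) K)) :
    Divg K n ((∑ i, c i • ((X i : MvPolynomial (Fin n) K) • Euler K n)) + D₀) =
      ∑ i, ((n + 1 : K) * c i) • X i + Divg K n D₀ := by
  rw [Divg_add, sum_smul_X_smul_Euler,
    Divg_smul_Euler_of_isHomogeneous K n (isHomogeneous_one_iff.mpr ⟨c, rfl⟩),
    ← Nat.cast_smul_eq_nsmul K, Finset.smul_sum]
  simp [smul_smul]

end

theorem degree_one_decomposition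
    (D : Derivation K (MvPolynomial (Fin n) K) (MvPolynomial (Fin n) K))
    (hD : ∀ k, (D (X k)).IsHomogeneous 2) :
    ∃! cD : (Fin n → K) ×
        Derivation K (MvPolynomial (Fin n) K) (MvPolynomial (Fin n) K),
      (∀ k, (cD.2 (X k)).IsHomogeneous 2) ∧
      Divg K n cD.2 = 0 ∧
      D = (∑ i, cD.1 i • ((X i : MvPolynomial (Fin n) K) • Euler K n)) + cD.2 := by
  have hn₁ : (n + 1 : K) ≠ 0 := n.cast_add_one_ne_zero
  obtain ⟨a, ha, ha_unique⟩ := existsUnique_sum_smul_X_eq (isHomogeneous_Divg K n hD)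
  set c : Fin n → K := fun i => (n + 1 : K)⁻¹ * a i
  set S := ∑ i, c i • ((X i : MvPolynomial (Fin n) K) • Euler K n)
  refine ⟨(c, D - S), ⟨fun k => ?_, ?_, (add_sub_cancel S D).symm⟩, ?_⟩
  · rw [Derivation.sub_apply, sum_smul_X_smul_Euler_apply_X]
    exact (hD k).sub ((isHomogeneous_one_iff.mpr ⟨c, rfl⟩).mul (isHomogeneous_X K k))
  · have h := Divg_sum_smul_X_smul_Euler_add K n c (D - S)
    simp only [S, c, add_sub_cancel, mul_inv_cancel_left₀ hn₁, ha] at h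
    exact left_eq_add.mp h
  · rintro ⟨c', D₀'⟩ ⟨-, hD₀', rfl⟩
    have hc' : (fun i => (n + 1 : K) * c' i) = a :=
      ha_unique _ (by rw [Divg_sum_smul_X_smul_Euler_add, hD₀', add_zero])
    have : c' = c := funext fun i => by simp [c, ← hc', inv_mul_cancel_left₀ hn₁]
    subst this
    exact Prod.ext rfl (add_sub_cancel_left S D₀').symm

end
end
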